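/- Let R be a left coherent ring. If every ghost morphism between bounded complexes of finitely presented left R-modules factors through a bounded acyclic complex of finitely presented modules, then R is von Neumann regular. -/

import Mathlib

open CategoryTheory Limits

universe u

namespace Stmt15

variable {R : Type u} [Ring R]

/-- A chain complex is bounded with finitely presented terms if it is nonzero in only
finitely many degrees and all of its terms are finitely presented modules. -/
def IsBoundedFP (X : ChainComplex (ModuleCat.{u} R) ℤ) : Prop :=
  (∃ s : Finset ℤ, ∀ n ∉ s, IsZero (X.X n)) ∧
    ∀ n : ℤ, Module.FinitePresentation R (X.X n)

/-- A chain map is a ghost if it induces zero on all homology groups. -/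
def IsGhost {X Y : ChainComplex (ModuleCat.{u} R) ℤ} (f : X ⟶ Y) : Prop :=
  ∀ n : ℤ, HomologicalComplex.homologyMap f n = 0

end Stmt15

open Stmt15

namespace Aux15

variable {R : Type u} [Ring R]

def dbX (M N : ModuleCat.{u} R) : ℤ → ModuleCat.{u} R
  | 0 => N
  | 1 => M
  | _ => ModuleCat.of R PUnit

lemma dbX_zero (M N : ModuleCat.{u} R) {n : ℤ} (h0 : n ≠ 0) (h1 : n ≠ 1) :
    IsZero (dbX M N n) := by
  have : dbX M N n = ModuleCat.of R PUnit := by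
    match n with
    | .ofNat 0 => exact absurd rfl h0
    | .ofNat 1 => exact absurd rfl h1
    | .ofNat (k+2) => rfl
    | .negSucc k => rfl
  rw [this]
  exact ModuleCat.isZero_of_subsingleton _

def db (M N : ModuleCat.{u} R) (φ : M ⟶ N) : ChainComplex (ModuleCat.{u} R) ℤ where
  X := dbX M N
  d i j := if h : i = 1 ∧ j = 0 then
      eqToHom (by obtain ⟨rfl, rfl⟩ := h; rfl) ≫ φ ≫ eqToHom (by obtain ⟨rfl, rfl⟩ := h; rfl)
    else 0
  shape i j hij := by
    rw [dif_neg]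
    rintro ⟨rfl, rfl⟩
    simp at hij
  d_comp_d' i j k hij hjk := by
    by_cases h2 : j = 1 ∧ k = 0
    · rw [dif_neg, zero_comp]
      rintro ⟨-, rfl⟩
      simp at hij
      omega
    · rw [dif_neg h2, comp_zero]

@[simp] lemma db_d (M N : ModuleCat.{u} R) (φ : M ⟶ N) : (db M N φ).d 1 0 = φ := by
  simp [db]
  rfl

lemma db_d_ne (M N : ModuleCat.{u} R) (φ : M ⟶ N) {i j : ℤ} (h : ¬(i = 1 ∧ j = 0)) :
    (db M N φ).d i j = 0 := dif_neg h

instance : Module.FinitePresentation R PUnit.{u+1} :=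
  Module.finitePresentation_of_projective R PUnit

lemma db_fp (M N : ModuleCat.{u} R) (φ : M ⟶ N)
    (hM : Module.FinitePresentation R M) (hN : Module.FinitePresentation R N) :
    ∀ n : ℤ, Module.FinitePresentation R ((db M N φ).X n) := by
  intro n
  match n with
  | .ofNat 0 => exact hN
  | .ofNat 1 => exact hM
  | .ofNat (k+2) => exact inferInstanceAs (Module.FinitePresentation R PUnit.{u+1})
  | .negSucc k => exact inferInstanceAs (Module.FinitePresentation R PUnit.{u+1})

lemma isZero_homology_of_isZero (K : ChainComplex (ModuleCat.{u} R) ℤ) (n : ℤ)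
    (h : IsZero (K.X n)) : IsZero (K.homology n) := by
  rw [← HomologicalComplex.exactAt_iff_isZero_homology]
  exact ShortComplex.exact_of_isZero_X₂ _ h

variable (a : R)

abbrev sp : Submodule R R := Submodule.span R {a}

abbrev XC : ChainComplex (ModuleCat.{u} R) ℤ :=
  db (ModuleCat.of R R) (ModuleCat.of R R) (ModuleCat.ofHom (LinearMap.toSpanSingleton R R a))

abbrev φm : ModuleCat.of R R ⟶ ModuleCat.of R ↥(sp a) :=
  ModuleCat.ofHom (LinearMap.toSpanSingleton R (sp a) ⟨a, Submodule.mem_span_singleton_self a⟩)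

abbrev YC : ChainComplex (ModuleCat.{u} R) ℤ :=
  db (ModuleCat.of R ↥(sp a)) (ModuleCat.of R PUnit) 0

lemma YC_zero {j : ℤ} (hj : j ≠ 1) : IsZero ((YC a).X j) := by
  by_cases h0 : j = 0
  · subst h0
    exact ModuleCat.isZero_of_subsingleton (ModuleCat.of R PUnit)
  · exact dbX_zero _ _ h0 hj

lemma XC_zero {j : ℤ} (h0 : j ≠ 0) (h1 : j ≠ 1) : IsZero ((XC a).X j) :=
  dbX_zero _ _ h0 h1

def fmap : XC a ⟶ YC a where
  f n := match n with
    | (1 : ℤ) => φm a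
    | _ => 0
  comm' i j hij := by
    simp only [ComplexShape.down_Rel] at hij
    by_cases hj : j = 1
    · subst hj
      obtain rfl : i = 2 := by omega
      show (0 : (XC a).X 2 ⟶ (YC a).X 2) ≫ _ = (XC a).d 2 1 ≫ _
      rw [zero_comp, db_d_ne _ _ _ (by simp), zero_comp]
    · exact (YC_zero a hj).eq_of_tgt _ _

lemma fmap_ghost : ∀ n : ℤ, HomologicalComplex.homologyMap (fmap a) n = 0 := by
  intro n
  by_cases h1 : n = 1
  · subst h1
    have hc : HomologicalComplex.cyclesMap (fmap a) 1 = 0 := by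
      rw [← cancel_mono ((YC a).iCycles 1), HomologicalComplex.cyclesMap_i, zero_comp]
      haveI : Mono (ModuleCat.ofHom (sp a).subtype) :=
        (ModuleCat.mono_iff_injective _).2 (Submodule.injective_subtype _)
      refine (cancel_mono (ModuleCat.ofHom (sp a).subtype)).1 ?_
      refine (Category.assoc _ _ _).trans (Eq.trans ?_ zero_comp.symm)
      have he : (fmap a).f 1 ≫ ModuleCat.ofHom (sp a).subtype = (XC a).d 1 0 := by
        rw [db_d]; rfl
      exact (congrArg ((XC a).iCycles 1 ≫ ·) he).trans ((XC a).iCycles_d 1 0)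
    rw [← cancel_epi ((XC a).homologyπ 1), HomologicalComplex.homologyπ_naturality, hc,
      zero_comp, comp_zero]
  · by_cases h0 : n = 0
    · subst h0
      exact (isZero_homology_of_isZero _ _ (YC_zero a (by simp))).eq_of_tgt _ _
    · exact (isZero_homology_of_isZero _ _ (XC_zero a h0 h1)).eq_of_src _ _

end Aux15

open Aux15

/-- Let `R` be a left coherent ring (every finitely generated left ideal is finitely
presented).  If every ghost morphism between bounded complexes of finitely presented left
`R`-modules factors through a bounded acyclic complex of finitely presented modules, then
`R` is von Neumann regular (`∀ a, ∃ b, a * b * a = a`). -/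
theorem stmt15 {R : Type u} [Ring R]
    (hcoh : ∀ I : Submodule R R, I.FG → Module.FinitePresentation R ↥I)
    (hghost : ∀ (X Y : ChainComplex (ModuleCat.{u} R) ℤ),
      IsBoundedFP X → IsBoundedFP Y → ∀ f : X ⟶ Y, IsGhost f →
        ∃ (W : ChainComplex (ModuleCat.{u} R) ℤ) (g : X ⟶ W) (h : W ⟶ Y),
          IsBoundedFP W ∧ (∀ n : ℤ, W.ExactAt n) ∧ f = g ≫ h) :
    ∀ a : R, ∃ b : R, a * b * a = a := by
  intro a
  have hXfp : IsBoundedFP (XC a) := by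
    refine ⟨⟨{0, 1}, fun n hn => ?_⟩, ?_⟩
    · simp only [Finset.mem_insert, Finset.mem_singleton, not_or] at hn
      exact XC_zero a hn.1 hn.2
    · exact db_fp _ _ _ (inferInstanceAs (Module.FinitePresentation R R))
        (inferInstanceAs (Module.FinitePresentation R R))
  have hYfp : IsBoundedFP (YC a) := by
    refine ⟨⟨{0, 1}, fun n hn => ?_⟩, ?_⟩
    · simp only [Finset.mem_insert, Finset.mem_singleton, not_or] at hn
      exact YC_zero a hn.2
    · exact db_fp _ _ _ (hcoh (sp a) (Submodule.fg_span_singleton a))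
        (inferInstanceAs (Module.FinitePresentation R PUnit.{u+1}))
  obtain ⟨W, g, h, hWfp, hWex, hfac⟩ :=
    hghost (XC a) (YC a) hXfp hYfp (fmap a) (fmap_ghost a)
  -- exactness of W at 0 and 1, in element form
  have hex0 := (HomologicalComplex.exactAt_iff' W 1 0 (-1) (by simp) (by simp)).1 (hWex 0)
  rw [ShortComplex.moduleCat_exact_iff] at hex0
  have hex0' : ∀ x₂ : W.X 0, W.d 0 (-1) x₂ = 0 → ∃ x₁ : W.X 1, W.d 1 0 x₁ = x₂ := hex0
  have hex1 := (HomologicalComplex.exactAt_iff' W 2 1 0 (by simp) (by simp)).1 (hWex 1)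
  rw [ShortComplex.moduleCat_exact_iff] at hex1
  have hex1' : ∀ x₂ : W.X 1, W.d 1 0 x₂ = 0 → ∃ x₁ : W.X 2, W.d 2 1 x₁ = x₂ := hex1
  -- the element 1 in degrees 0 and 1 of XC
  set e0 : ((XC a).X 0 : Type u) := (1 : R)
  set e1 : ((XC a).X 1 : Type u) := (1 : R)
  -- g.f 0 e0 is a cycle
  have hu : W.d 0 (-1) (g.f 0 e0) = 0 := by
    have hc : g.f 0 ≫ W.d 0 (-1) = 0 := by
      rw [g.comm 0 (-1), db_d_ne _ _ _ (by simp), zero_comp]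
    exact ConcreteCategory.congr_hom hc e0
  obtain ⟨w, hw⟩ := hex0' (g.f 0 e0) hu
  -- degree 1 comparison
  have h3 : W.d 1 0 (g.f 1 e1) = W.d 1 0 (a • w) := by
    have hc : g.f 1 ≫ W.d 1 0
        = ModuleCat.ofHom (LinearMap.toSpanSingleton R R a) ≫ g.f 0 := by
      rw [g.comm 1 0, db_d]
      rfl
    have h4 : W.d 1 0 (g.f 1 e1) = g.f 0 ((1 : R) • a) := ConcreteCategory.congr_hom hc e1
    have h5 : ((1 : R) • a : R) = a • e0 := by
      show (1 : R) • a = a • (1 : R)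
      simp
    rw [h4, h5, map_smul, ← hw, ← map_smul]
  obtain ⟨v, hv⟩ := hex1' (g.f 1 e1 - a • w) (by rw [map_sub, h3, sub_self])
  -- h kills boundaries from degree 2
  have h6 : h.f 1 (W.d 2 1 v) = 0 := by
    have hc : W.d 2 1 ≫ h.f 1 = 0 := by
      rw [← h.comm 2 1, db_d_ne _ _ _ (by simp), comp_zero]
    exact ConcreteCategory.congr_hom hc v
  -- the factorization in degree 1
  have h7 : (fmap a).f 1 e1 = h.f 1 (g.f 1 e1) := by
    rw [hfac]
    simp
  set c : (sp a : Type u) := h.f 1 w with hcdef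
  have h8 : a = a * (c : R) := by
    have h9 : (fmap a).f 1 e1 = (⟨a, Submodule.mem_span_singleton_self a⟩ : sp a) := by
      show (1 : R) • (⟨a, Submodule.mem_span_singleton_self a⟩ : sp a) = _
      simp
    have h10 : g.f 1 e1 = a • w + W.d 2 1 v := by rw [hv]; abel
    have h11 : (fmap a).f 1 e1 = a • c := by
      rw [h7, h10, map_add, map_smul, h6, add_zero, hcdef]
      rfl
    have h12 := h9.symm.trans h11
    have h13 := congrArg (Subtype.val) h12
    simpa [smul_eq_mul] using h13
  obtain ⟨b, hb⟩ := Submodule.mem_span_singleton.1 c.2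
  refine ⟨b, ?_⟩
  have hba : b * a = (c : R) := by rw [← smul_eq_mul, hb]
  rw [mul_assoc, hba, ← h8]
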